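/- arXiv:1311.2330 — 5 statements merged into one kernel-verified Lean document; each statement's English description precedes it below -/
import Mathlib

section
/- Let α ≥ 2 be a cardinal and κ an infinite cardinal. Then: (b) if κ is regular, then (α^{<κ})^{<κ} = α^{<κ}; (c) if κ is singular, then (α^{<κ})^{<κ} = α^κ; and (d) in all cases ((α^{<κ})^{<κ})^{<κ} = (α^{<κ})^{<κ}. -/
/-!
Write `m = α ^< κ`. If `κ` is regular and `μ < κ`, rank the elements of a well-order of type `m`
by cardinals `x < κ` with `#(Iio t) < α ^ x`. By regularity every `μ`-sequence has bounded rank,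
so it lies in a piece of size at most `α ^ x` for a single `x < κ`, and
`m ^ μ ≤ κ * sup_{x < κ} (α ^ x) ^ μ = m`. If `κ` is singular, a cofinal subset of size `cof κ`
writes `κ` as a sum of `cof κ` smaller cardinals, so `α ^ κ ≤ m ^ cof κ ≤ m ^< κ`, while
`m ^< κ ≤ (α ^ κ) ^< κ = α ^ κ`. Part (d) applies (b), resp. (c) and `(α ^ κ) ^< κ = α ^ κ`.
-/

open Cardinal Set

universe u

namespace Cardinal

variable {α κ : Cardinal.{u}}

theorem lt_powerlt_iff {c : Cardinal.{u}} : c < α ^< κ ↔ ∃ x < κ, c < α ^ x := by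
  simpa using (powerlt_le (a := α) (b := κ) (c := c)).not

theorem self_le_powerlt (hα : 2 ≤ α) : κ ≤ α ^< κ :=
  le_of_forall_lt fun x hx =>
    (cantor' x (one_lt_two.trans_le hα)).trans_le (le_powerlt α hx)

theorem powerlt_le_powerlt_right {β : Cardinal.{u}} (h : α ≤ β) : α ^< κ ≤ β ^< κ :=
  powerlt_le.2 fun _ hx => (power_le_power_right h).trans (le_powerlt β hx)

theorem power_power_le_powerlt (hκ : ℵ₀ ≤ κ) {x μ : Cardinal.{u}} (hx : x < κ) (hμ : μ < κ) :
    (α ^ x) ^ μ ≤ α ^< κ := by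
  rw [← power_mul]
  exact le_powerlt α (mul_lt_of_lt hκ hx hμ)

theorem power_powerlt_self (hκ : ℵ₀ ≤ κ) (hα : α ≠ 0) : (α ^ κ) ^< κ = α ^ κ := by
  refine le_antisymm (powerlt_le.2 fun μ hμ => ?_) ?_
  · rcases eq_or_ne μ 0 with rfl | hμ0
    · simpa using Cardinal.one_le_iff_ne_zero.2 (power_ne_zero κ hα)
    · rw [← power_mul, mul_eq_left hκ hμ.le hμ0]
  · simpa using le_powerlt (α ^ κ) (one_lt_aleph0.trans_le hκ)

theorem mk_subtype_mk_Iio_lt_le {T : Type u} [LinearOrder T] [WellFoundedLT T] (c : Cardinal.{u}) :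
    #{t : T // #(Iio t) < c} ≤ c := by
  have h := lift_mk_le_lift_mk_of_injective (β := Iio c.ord)
    (f := fun t : {t : T // #(Iio t) < c} =>
      ⟨Ordinal.typein (α := T) (· < ·) t.1, mem_Iio.2 (lt_ord.2 t.2)⟩)
    fun s t h => Subtype.ext (Ordinal.typein_injective _ (congrArg Subtype.val h))
  simpa [mk_Iio_ordinal] using h

theorem exists_mk_Iio_eq {x : Cardinal.{u}} (hx : x < κ) : ∃ j : κ.ord.ToType, #(Iio j) = x := by
  set j := Ordinal.ToType.mk ⟨x.ord, mem_Iio.2 (ord_lt_ord.2 hx)⟩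
  have h : Ordinal.typein (α := κ.ord.ToType) (· < ·) j = x.ord := by
    rw [← Ordinal.ToType.mk_symm_apply_coe]
    simp [j]
  refine ⟨j, (Ordinal.card_typein (α := κ.ord.ToType) (r := (· < ·)) j).symm.trans ?_⟩
  rw [h, card_ord]

theorem mk_fun_le_sum_of_lt_cof {ι J T : Type u} [LinearOrder J] (rk : T → J)
    (hι : #ι < Order.cof J) : #(ι → T) ≤ sum fun j => #(ι → {t // rk t < j}) := by
  have bdd (f : ι → T) : ∃ j, ∀ i, rk (f i) < j := by
    have : ¬ IsCofinal (range (rk ∘ f)) := fun h =>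
      ((Order.cof_le h).trans mk_range_le).not_gt hι
    simpa [IsCofinal] using this
  choose b hb using bdd
  rw [← mk_sigma]
  exact mk_le_of_injective (f := fun f => (⟨b f, fun i => ⟨f i, hb f i⟩⟩ : Σ j, ι → _))
    (Function.LeftInverse.injective (g := fun p i => (p.2 i).1) fun _ => rfl)

theorem mk_le_sum_mk_Iic_of_isCofinal {T : Type u} [LinearOrder T] {s : Set T}
    (hs : IsCofinal s) : #T ≤ sum fun j : s => #(Iic j.1) := by
  have hcover : (Set.univ : Set T) ⊆ ⋃ j : s, Iic j.1 := fun t _ => by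
    obtain ⟨j, hj, htj⟩ := hs t
    exact mem_iUnion.2 ⟨⟨j, hj⟩, htj⟩
  calc #T = #(Set.univ : Set T) := mk_univ.symm
    _ ≤ #(⋃ j : s, Iic j.1) := mk_le_mk_of_subset hcover
    _ ≤ _ := mk_iUnion_le_sum_mk

theorem power_le_powerlt_power_cof (hα : α ≠ 0) (hκ : ℵ₀ ≤ κ) :
    α ^ κ ≤ (α ^< κ) ^ κ.ord.cof := by
  obtain ⟨s, hs, hs_card⟩ := Order.exists_cof_eq κ.ord.ToType
  have hIic (j : κ.ord.ToType) : #(Iic j) < κ := by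
    simpa using mk_Iic_lt j (by simp) (by simpa using hκ)
  calc α ^ κ ≤ α ^ sum fun j : s => #(Iic j.1) :=
        power_le_power_left hα (by simpa using mk_le_sum_mk_Iic_of_isCofinal hs)
    _ = prod fun j : s => α ^ #(Iic j.1) := power_sum α _
    _ ≤ prod fun _ : s => α ^< κ := prod_le_prod _ _ fun j => le_powerlt α (hIic j)
    _ = (α ^< κ) ^ κ.ord.cof := by rw [prod_const', hs_card, Ordinal.cof_toType]

theorem powerlt_powerlt_of_isRegular (hα : 2 ≤ α) (hκ : κ.IsRegular) :
    (α ^< κ) ^< κ = α ^< κ := by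
  set m := α ^< κ
  have hα0 : α ≠ 0 := by positivity
  have hκm : κ ≤ m := self_le_powerlt hα
  have hm : ℵ₀ ≤ m := hκ.aleph0_le.trans hκm
  refine le_antisymm (powerlt_le.2 fun μ hμ => ?_)
    (by simpa using le_powerlt m (one_lt_aleph0.trans_le hκ.aleph0_le))
  have hrank (t : m.ord.ToType) : ∃ j : κ.ord.ToType, #(Iio t) < α ^ #(Iio j) := by
    have ht : #(Iio t) < m := by simpa using mk_Iio_lt t (by simp)
    obtain ⟨x, hx, htx⟩ := lt_powerlt_iff.1 ht
    obtain ⟨j, rfl⟩ := exists_mk_Iio_eq hx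
    exact ⟨j, htx⟩
  choose rk hrk using hrank
  have hpiece (j : κ.ord.ToType) : #(μ.out → {t // rk t < j}) ≤ m := by
    have hsub : #{t // rk t < j} ≤ α ^ #(Iio j) :=
      (mk_subtype_mono fun t ht => (hrk t).trans_le (power_le_power_left hα0
        (mk_le_mk_of_subset (Iio_subset_Iio ht.le)))).trans (mk_subtype_mk_Iio_lt_le _)
    rw [← power_def, mk_out]
    exact (power_le_power_right hsub).trans
      (power_power_le_powerlt hκ.aleph0_le (by simpa using mk_Iio_lt j (by simp)) hμ)
  calc m ^ μ = #(μ.out → m.ord.ToType) := by rw [← power_def, mk_out, mk_ord_toType]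
    _ ≤ sum fun j => #(μ.out → {t // rk t < j}) :=
        mk_fun_le_sum_of_lt_cof rk (by rwa [mk_out, Ordinal.cof_toType, hκ.cof_ord])
    _ ≤ sum fun _ : κ.ord.ToType => m := sum_le_sum _ _ hpiece
    _ = m := by rw [sum_const', mk_ord_toType, mul_eq_right hm hκm hκ.ne_zero]

theorem powerlt_powerlt_of_not_isRegular (hα : α ≠ 0) (hκ : ℵ₀ ≤ κ) (hsing : ¬κ.IsRegular) :
    (α ^< κ) ^< κ = α ^ κ := by
  refine le_antisymm ?_ ?_
  · calc (α ^< κ) ^< κ ≤ (α ^ κ) ^< κ :=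
          powerlt_le_powerlt_right (powerlt_le.2 fun _ hx => power_le_power_left hα hx.le)
      _ = α ^ κ := power_powerlt_self hκ hα
  · exact (power_le_powerlt_power_cof hα hκ).trans
      (le_powerlt _ (IsSingular.of_not_isRegular hκ hsing).cof_ord_lt)

end Cardinal

theorem stmt0 (α κ : Cardinal.{u}) (hα : 2 ≤ α) (hκ : ℵ₀ ≤ κ) :
    (κ.IsRegular → (α ^< κ) ^< κ = α ^< κ) ∧
    (¬κ.IsRegular → (α ^< κ) ^< κ = α ^ κ) ∧
    ((α ^< κ) ^< κ) ^< κ = (α ^< κ) ^< κ := by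
  have hα0 : α ≠ 0 := by positivity
  refine ⟨powerlt_powerlt_of_isRegular hα, powerlt_powerlt_of_not_isRegular hα0 hκ, ?_⟩
  by_cases hreg : κ.IsRegular
  · rw [powerlt_powerlt_of_isRegular hα hreg, powerlt_powerlt_of_isRegular hα hreg]
  · rw [powerlt_powerlt_of_not_isRegular hα0 hκ hreg, power_powerlt_self hκ hα0]
end

section
/- Let κ and α be infinite cardinals. Then: (a) if κ ≥ α⁺ then w((2^α)_κ) = 2^α; and (b) if κ ≤ α⁺ then w((2^α)_κ) = α^{<κ}. -/
open Cardinal TopologicalSpace Set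

universe u

/-- The `κ`-box topology on a product of topological spaces: generated by the boxes
`Π i, U i` with each `U i` open and fewer than `κ` coordinates restricted. -/
def boxTopology (κ : Cardinal.{u}) {ι : Type u} (X : ι → Type u)
    [∀ i, TopologicalSpace (X i)] : TopologicalSpace (∀ i, X i) :=
  TopologicalSpace.generateFrom
    {S | ∃ U : ∀ i, Set (X i), (∀ i, IsOpen (U i)) ∧
      #{i | U i ≠ Set.univ} < κ ∧ S = Set.pi Set.univ U}

/-- The weight of a topological space: the least cardinality of a topological base
(finite values allowed). -/
noncomputable def wt (X : Type u) [TopologicalSpace X] : Cardinal.{u} :=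
  sInf {c | ∃ B : Set (Set X), IsTopologicalBasis B ∧ #B = c}

/-!
For an infinite index set `A` and a finite discrete nontrivial factor `Y`, the weight of the
`κ`-box product `Y^A` is the number of subsets of `A` of size `< κ`. The boxes form a base of
at most that size, since a box is coded by a small subset of `A × Set Y` and `A × Set Y` embeds
into `A`. Conversely, for a small `s` every base must contain a set squeezed between the point
that is `y₁` exactly on `s` and the box `{x | x = y₁ on s}`, and such a set determines `s`.

It remains to count small subsets of `A`, with `#A = α`. If `α < κ`, all `2^α` subsets are
small. If `κ ≤ α⁺`, sizes `λ < κ` are at most `α`, so graphs of maps `λ → A`, placed inside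
`λ × A ≃ A`, give `α^λ` small sets; sorting small sets by size gives the bound
`κ · α^<κ = α^<κ`.
-/

section Weight

variable {X : Type u} [TopologicalSpace X]

theorem wt_le_mk_of_isTopologicalBasis {B : Set (Set X)} (hB : IsTopologicalBasis B) :
    wt X ≤ #B :=
  csInf_le' ⟨B, hB, rfl⟩

theorem le_wt_of_forall_isTopologicalBasis {c : Cardinal.{u}}
    (h : ∀ B : Set (Set X), IsTopologicalBasis B → c ≤ #B) : c ≤ wt X :=
  le_csInf ⟨_, _, isTopologicalBasis_opens, rfl⟩ fun _ ⟨B, hB, hc⟩ => hc ▸ h B hB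

end Weight

section SmallSets

theorem mk_set_lt_le_of_injective {Z A : Type u} {g : Z → A} (hg : g.Injective)
    (κ : Cardinal.{u}) : #{t : Set Z // #t < κ} ≤ #{s : Set A // #s < κ} :=
  mk_le_of_injective (f := fun t => ⟨g '' t.1, mk_image_le.trans_lt t.2⟩)
    fun _ _ h => Subtype.ext (hg.image_injective (congrArg Subtype.val h))

theorem mk_set_lt_of_mk_lt {A : Type u} {κ : Cardinal.{u}} (h : #A < κ) :
    #{s : Set A // #s < κ} = 2 ^ #A := by
  rw [← mk_set]
  exact mk_congr (Equiv.subtypeUnivEquiv fun s => (mk_set_le s).trans_lt h)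

theorem mk_set_lt_le (A : Type u) [Infinite A] (κ : Cardinal.{u}) :
    #{s : Set A // #s < κ} ≤ κ * #A ^< κ := by
  have hcover : {s : Set A | #s < κ} ⊆ ⋃ o : Iio κ.ord, {s | #s ≤ o.1.card} := fun s hs =>
    mem_iUnion.2 ⟨⟨(#s).ord, ord_lt_ord.2 hs⟩, by simp⟩
  have hpiece : ∀ o : Iio κ.ord, #{s : Set A | #s ≤ o.1.card} ≤ #A ^< κ := fun o =>
    (mk_bounded_set_le_of_infinite A _).trans (le_powerlt _ (lt_ord.1 o.2))
  rw [← lift_le.{u + 1}]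
  calc lift.{u + 1} #{s : Set A | #s < κ}
      ≤ lift.{u + 1} #(⋃ o : Iio κ.ord, {s : Set A | #s ≤ o.1.card}) :=
        lift_le.2 (mk_le_mk_of_subset hcover)
    _ ≤ lift.{u} #(Iio κ.ord) * ⨆ o : Iio κ.ord, lift.{u + 1} #{s : Set A | #s ≤ o.1.card} :=
        mk_iUnion_le_lift _
    _ ≤ lift.{u + 1} κ * lift.{u + 1} (#A ^< κ) := by
        rw [mk_Iio_ordinal, card_ord, lift_lift]
        gcongr
        exact ciSup_le' fun o => lift_le.2 (hpiece o)
    _ = lift.{u + 1} (κ * #A ^< κ) := (lift_mul _ _).symm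

theorem power_le_mk_set_le (A : Type u) [Infinite A] {c : Cardinal.{u}} (hc : c ≤ #A) :
    #A ^ c ≤ #{s : Set A // #s ≤ c} := by
  obtain ⟨e⟩ : Nonempty (c.out × A ↪ A) := by
    rw [← le_def, mk_prod, lift_id, lift_id, mk_out]
    exact (mul_le_mul_left hc _).trans (mul_eq_self (aleph0_le_mk A)).le
  -- `f` is encoded by its graph, moved into `A` along `e`.
  let graph (f : c.out → A) : Set A := range fun ξ => e (ξ, f ξ)
  have hgraph : graph.Injective := by
    intro f g hfg
    funext ξ
    obtain ⟨ξ', hξ'⟩ : e (ξ, f ξ) ∈ graph g := hfg ▸ mem_range_self ξ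
    obtain ⟨rfl, h⟩ := Prod.mk.inj (e.injective hξ')
    exact h.symm
  calc #A ^ c = #(c.out → A) := by rw [← power_def, mk_out]
    _ ≤ #{s : Set A // #s ≤ c} :=
      mk_le_of_injective (f := fun f => ⟨graph f, mk_range_le.trans (mk_out c).le⟩)
        fun _ _ h => hgraph (Subtype.ext_iff.1 h)

theorem mk_set_lt_eq_powerlt (A : Type u) [Infinite A] {κ : Cardinal.{u}} (hκ : 1 < κ)
    (hκA : κ ≤ Order.succ #A) : #{s : Set A // #s < κ} = #A ^< κ := by
  have hApow : #A ≤ #A ^< κ := by simpa using le_powerlt #A hκ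
  have hκpow : κ ≤ #A ^< κ := by
    rcases hκA.lt_or_eq with hlt | rfl
    · exact (Order.lt_succ_iff.1 hlt).trans hApow
    · rw [powerlt_succ (mk_ne_zero A)]
      exact Order.succ_le_of_lt ((cantor _).trans_le
        (power_le_power_right (natCast_lt_aleph0 (n := 2) |>.le.trans (aleph0_le_mk A))))
  refine le_antisymm ?_ (powerlt_le.2 fun c hc => ?_)
  · calc #{s : Set A // #s < κ} ≤ κ * #A ^< κ := mk_set_lt_le A κ
      _ ≤ #A ^< κ * #A ^< κ := mul_le_mul_left hκpow _
      _ = #A ^< κ := mul_eq_self ((aleph0_le_mk A).trans hApow)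
  · refine (power_le_mk_set_le A (Order.lt_succ_iff.1 (hc.trans_le hκA))).trans ?_
    exact ⟨Subtype.impEmbedding _ _ fun _ hs => hs.trans_lt hc⟩

end SmallSets

section Boxes

variable {ι : Type u} (κ : Cardinal.{u}) (X : ι → Type u) [∀ i, TopologicalSpace (X i)]

def boxes : Set (Set (∀ i, X i)) :=
  {S | ∃ U : ∀ i, Set (X i), (∀ i, IsOpen (U i)) ∧
    #{i | U i ≠ Set.univ} < κ ∧ S = Set.pi Set.univ U}

theorem isTopologicalBasis_boxes (hκ : ℵ₀ ≤ κ) :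
    @IsTopologicalBasis _ (boxTopology κ X) (boxes κ X) := by
  let _ := boxTopology κ X
  refine ⟨?_, ?_, rfl⟩
  · rintro _ ⟨U, hU, hUκ, rfl⟩ _ ⟨V, hV, hVκ, rfl⟩ x hx
    have hsupp : {i | U i ∩ V i ≠ Set.univ} ⊆ {i | U i ≠ Set.univ} ∪ {i | V i ≠ Set.univ} := by
      intro i hi
      by_contra h
      simp_all
    refine ⟨_, ⟨fun i => U i ∩ V i, fun i => (hU i).inter (hV i), ?_, rfl⟩, ?_, ?_⟩
    · exact (mk_le_mk_of_subset hsupp).trans_lt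
        ((mk_union_le _ _).trans_lt (add_lt_of_lt hκ hUκ hVκ))
    · rwa [pi_inter_distrib]
    · rw [pi_inter_distrib]
  · refine sUnion_eq_univ_iff.2 fun x =>
      ⟨univ, ⟨fun _ => univ, fun _ => isOpen_univ, ?_, ?_⟩, trivial⟩
    · simpa using aleph0_pos.trans_le hκ
    · simp

theorem mk_boxes_le : #(boxes κ X) ≤ #{t : Set (Σ i, Set (X i)) // #t < κ} := by
  -- A box is cut out by the pairs `(i, U i)` of its restricted coordinates.
  let cut (t : {t : Set (Σ i, Set (X i)) // #t < κ}) : Set (∀ i, X i) :=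
    {x | ∀ p ∈ t.1, x p.1 ∈ p.2}
  have hcut : boxes κ X ⊆ range cut := by
    rintro _ ⟨U, -, hUκ, rfl⟩
    refine ⟨⟨(fun i => ⟨i, U i⟩) '' {i | U i ≠ Set.univ}, mk_image_le.trans_lt hUκ⟩, ?_⟩
    ext x
    simp only [cut, mem_image, forall_exists_index, and_imp, mem_pi, mem_univ, true_implies]
    refine ⟨fun h i => ?_, fun h _ i _ hp => hp ▸ h i⟩
    by_cases hi : U i = Set.univ
    · exact hi ▸ mem_univ _
    · exact h _ i hi rfl
  exact (mk_le_mk_of_subset hcut).trans mk_range_le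

end Boxes

section ConstantFactor

variable {A Y : Type u} [TopologicalSpace Y] (κ : Cardinal.{u})

theorem mk_set_lt_le_of_isTopologicalBasis [DiscreteTopology Y] [Nontrivial Y]
    {B : Set (Set (A → Y))} (hB : @IsTopologicalBasis _ (boxTopology κ fun _ => Y) B) :
    #{s : Set A // #s < κ} ≤ #B := by
  classical
  let _ := boxTopology κ fun _ : A => Y
  obtain ⟨y₀, y₁, hy⟩ := exists_pair_ne Y
  let point (s : Set A) : A → Y := fun i => if i ∈ s then y₁ else y₀
  have hbox (s : {s : Set A // #s < κ}) : IsOpen (s.1.pi fun _ => {y₁}) := by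
    rw [← pi_univ_ite]
    refine isOpen_generateFrom_of_mem ⟨_, fun _ => isOpen_discrete _, ?_, rfl⟩
    refine (mk_le_mk_of_subset fun i hi => ?_).trans_lt s.2
    by_contra h
    simp [h] at hi
  have hpoint (s : Set A) : point s ∈ s.pi fun _ => {y₁} := fun i hi => by simp [point, hi]
  choose b hbB hpb hbU using fun s => hB.exists_subset_of_mem_open (hpoint s.1) (hbox s)
  -- Squeezed between `point s` and the box over `s`, the basic set `b s` determines `s`.
  have hrecover (s : {s : Set A // #s < κ}) : s.1 = {i | ∀ x ∈ b s, x i = y₁} := by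
    ext i
    refine ⟨fun hi x hx => hbU s hx i hi, fun h => ?_⟩
    by_contra hi
    simpa [point, hi, hy] using h _ (hpb s)
  refine mk_le_of_injective (f := fun s => ⟨b s, hbB s⟩) fun s t hst => Subtype.ext ?_
  have hbst : b s = b t := congrArg Subtype.val hst
  rw [hrecover s, hrecover t, hbst]

theorem wt_boxTopology_eq [Infinite A] [Finite Y] [DiscreteTopology Y] [Nontrivial Y]
    (hκ : ℵ₀ ≤ κ) : @wt (A → Y) (boxTopology κ fun _ => Y) = #{s : Set A // #s < κ} := by
  let _ := boxTopology κ fun _ : A => Y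
  refine le_antisymm ?_ (le_wt_of_forall_isTopologicalBasis fun _ hB =>
    mk_set_lt_le_of_isTopologicalBasis κ hB)
  obtain ⟨g⟩ : Nonempty ((Σ _ : A, Set Y) ↪ A) := by
    rw [← le_def, mk_sigma, sum_const, lift_id, lift_id]
    exact (mul_eq_left (aleph0_le_mk A) ((lt_aleph0_of_finite _).le.trans (aleph0_le_mk A))
      (mk_ne_zero _)).le
  calc wt (A → Y) ≤ #(boxes κ fun _ : A => Y) :=
        wt_le_mk_of_isTopologicalBasis (isTopologicalBasis_boxes κ _ hκ)
    _ ≤ #{t : Set (Σ _ : A, Set Y) // #t < κ} := mk_boxes_le κ _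
    _ ≤ #{s : Set A // #s < κ} := mk_set_lt_le_of_injective g.injective κ

end ConstantFactor

theorem stmt3 (α κ : Cardinal.{u}) (hα : ℵ₀ ≤ α) (hκ : ℵ₀ ≤ κ)
    (A : Type u) (hA : #A = α) :
    (Order.succ α ≤ κ →
      @wt (∀ _ : A, ULift.{u} Bool) (boxTopology κ fun _ => ULift.{u} Bool) = 2 ^ α) ∧
    (κ ≤ Order.succ α →
      @wt (∀ _ : A, ULift.{u} Bool) (boxTopology κ fun _ => ULift.{u} Bool) = α ^< κ) := by
  subst hA
  have : Infinite A := infinite_iff.2 hα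
  rw [wt_boxTopology_eq κ hκ]
  exact ⟨fun h => mk_set_lt_of_mk_lt (Order.succ_le_iff.1 h),
    mk_set_lt_eq_powerlt A (one_lt_aleph0.trans_le hκ)⟩
end

section
/- Let κ be an infinite cardinal and let E = Π_{i∈I} E_i be a product of topological spaces, each of which is strongly κ-discrete. Then (E_I)_κ (the product with the κ-box topology) is strongly κ-discrete. -/
open Cardinal TopologicalSpace Set

universe u

/-- A subset `A` of a space is strongly discrete if there is a family of pairwise
disjoint open sets `U a` (for `a ∈ A`) with `a ∈ U a`. -/
def StronglyDiscrete {X : Type u} [TopologicalSpace X] (A : Set X) : Prop :=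
  ∃ U : X → Set X, (∀ a ∈ A, IsOpen (U a) ∧ a ∈ U a) ∧
    A.Pairwise fun a b => Disjoint (U a) (U b)

/-- A space is strongly `κ`-discrete if every subset of cardinality `< κ` is
strongly discrete. -/
def StronglyKappaDiscrete (κ : Cardinal.{u}) (X : Type u) [TopologicalSpace X] : Prop :=
  ∀ A : Set X, #A < κ → StronglyDiscrete A

/-!
Separate each point `a` of `A` by the box `Π_{i ∈ S a} W i (a i)`, where `W i` is a disjoint
open family separating the `i`-th projection of `A`, and `S a` consists of one coordinate in
which `a` and `b` differ for each `b ∈ A`. Then `#(S a) ≤ #A + #A < κ`, so the box is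
`κ`-box open, and two such boxes share a coordinate in which they are disjoint.
-/

open scoped Topology

variable {ι : Type u} {E : ι → Type u}

theorem isOpen_pi_boxTopology [∀ i, TopologicalSpace (E i)] {κ : Cardinal.{u}} {S : Set ι}
    (hS : #S < κ) {U : ∀ i, Set (E i)} (hU : ∀ i ∈ S, IsOpen (U i)) :
    IsOpen[boxTopology κ E] (S.pi U) := by
  classical
  rw [← univ_pi_ite]
  refine isOpen_generateFrom_of_mem
    ⟨_, fun i => ?_, (mk_le_mk_of_subset fun i hi => ?_).trans_lt hS, rfl⟩
  · split_ifs with hi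
    exacts [hU i hi, isOpen_univ]
  · by_contra hiS
    exact hi (if_neg hiS)

theorem exists_separating_coords (A : Set (∀ i, E i)) :
    ∃ S : (∀ i, E i) → Set ι, (∀ a, #(S a) ≤ #A + #A) ∧
      A.Pairwise fun a b => ∃ i ∈ S a ∩ S b, a i ≠ b i := by
  -- `choose!` below needs `Nonempty ι`; for empty `ι` the product is a single point.
  rcases isEmpty_or_nonempty ι with _ | _
  · exact ⟨fun _ => ∅, fun _ => by simp, Set.subsingleton_of_subsingleton.pairwise _⟩
  choose! d hd using fun a b : ∀ i, E i => (Function.ne_iff (f₁ := a) (f₂ := b)).mp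
  refine ⟨fun a => d a '' A ∪ (d · a) '' A, fun a => ?_, fun a ha b hb hab =>
    ⟨d a b, ⟨.inl ⟨b, hb, rfl⟩, .inr ⟨a, ha, rfl⟩⟩, hd a b hab⟩⟩
  exact (mk_union_le _ _).trans (add_le_add mk_image_le mk_image_le)

theorem stronglyDiscrete_boxTopology [∀ i, TopologicalSpace (E i)] {κ : Cardinal.{u}}
    (hκ : ℵ₀ ≤ κ) {A : Set (∀ i, E i)} (hA : #A < κ)
    (h : ∀ i, StronglyDiscrete (Function.eval i '' A)) :
    @StronglyDiscrete _ (boxTopology κ E) A := by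
  choose W hW hWdisj using h
  obtain ⟨S, hS, hSsep⟩ := exists_separating_coords A
  refine ⟨fun a => (S a).pi fun i => W i (a i),
    fun a ha => ⟨?_, fun i _ => (hW i _ ⟨a, ha, rfl⟩).2⟩, fun a ha b hb hab => ?_⟩
  · exact isOpen_pi_boxTopology ((hS a).trans_lt (add_lt_of_lt hκ hA hA))
      fun i _ => (hW i _ ⟨a, ha, rfl⟩).1
  · obtain ⟨i, ⟨hia, hib⟩, hne⟩ := hSsep ha hb hab
    exact ((hWdisj i ⟨a, ha, rfl⟩ ⟨b, hb, rfl⟩ hne).preimage (Function.eval i)).mono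
      (fun x hx => hx i hia) (fun x hx => hx i hib)

theorem stmt5 (κ : Cardinal.{u}) (hκ : ℵ₀ ≤ κ)
    {ι : Type u} (E : ι → Type u) [∀ i, TopologicalSpace (E i)]
    (h : ∀ i, StronglyKappaDiscrete κ (E i)) :
    @StronglyKappaDiscrete κ (∀ i, E i) (boxTopology κ E) := fun _ hA =>
  stronglyDiscrete_boxTopology hκ hA fun i => h i _ (mk_image_le.trans_lt hA)
end

section
/- Let α ≥ 2 and κ ≥ ω be cardinals and let E := (D(α))^κ. Then d(E_κ) ≥ α^{<κ}. -/
/-!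
A dense set of the `κ`-box product meets every box that fixes the coordinates in a set `S` of
fewer than `κ` indices, so restriction to `S` maps it onto `Π i ∈ S, X i`. With discrete
factors of size `α`, every `α ^ ν` with `ν < κ` is therefore at most the size of a dense set.
-/

open Cardinal TopologicalSpace Set

universe u

/-- The density character of a topological space: the least cardinality of a dense subset
(finite values allowed). -/
noncomputable def dens (X : Type u) [TopologicalSpace X] : Cardinal.{u} :=
  sInf {c | ∃ D : Set X, Dense D ∧ #D = c}

open Topology

theorem le_dens_of_forall_dense {X : Type u} [TopologicalSpace X] {c : Cardinal.{u}}
    (h : ∀ D : Set X, Dense D → c ≤ #D) : c ≤ dens X :=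
  le_csInf ⟨_, univ, dense_univ, rfl⟩ fun _ ⟨D, hD, hc⟩ => hc ▸ h D hD

section BoxTopology

variable {κ : Cardinal.{u}} {ι : Type u} {X : ι → Type u} [∀ i, TopologicalSpace (X i)]

theorem isOpen_boxTopology_pi {S : Set ι} (hS : #S < κ) {U : ∀ i, Set (X i)}
    (hU : ∀ i ∈ S, IsOpen (U i)) : IsOpen[boxTopology κ X] (S.pi U) := by
  classical
  rw [← pi_univ_ite]
  refine GenerateOpen.basic _ ⟨_, fun i => ?_, ?_, rfl⟩
  · split_ifs with hi
    exacts [hU i hi, isOpen_univ]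
  · refine lt_of_le_of_lt (mk_le_mk_of_subset fun i hi => ?_) hS
    by_contra hiS
    exact hi (if_neg hiS)

theorem surjOn_domRestrict_of_dense_boxTopology [∀ i, DiscreteTopology (X i)]
    [∀ i, Nonempty (X i)] {D : Set (∀ i, X i)} (hD : @Dense _ (boxTopology κ X) D) {S : Set ι}
    (hS : #S < κ) : SurjOn S.domRestrict D univ := by
  classical
  let := boxTopology κ X
  intro f _
  let g : ∀ i, X i := fun i => if h : i ∈ S then f ⟨i, h⟩ else Classical.arbitrary _
  have hopen : IsOpen (S.pi fun i => {g i}) :=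
    isOpen_boxTopology_pi hS fun _ _ => isOpen_discrete _
  obtain ⟨x, hx, hxD⟩ := hD.inter_open_nonempty _ hopen ⟨g, fun _ _ => rfl⟩
  refine ⟨x, hxD, domRestrict_eq_iff.mpr fun i hi => ?_⟩
  simpa [g, hi] using hx i hi

theorem mk_pi_le_of_dense_boxTopology [∀ i, DiscreteTopology (X i)] [∀ i, Nonempty (X i)]
    {D : Set (∀ i, X i)} (hD : @Dense _ (boxTopology κ X) D) {S : Set ι} (hS : #S < κ) :
    #(∀ i : S, X i) ≤ #D :=
  mk_le_of_surjective (surjOn_iff_surjective.mp (surjOn_domRestrict_of_dense_boxTopology hD hS))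

end BoxTopology

theorem stmt7_general (α κ : Cardinal.{u}) (hα : 2 ≤ α)
    (A K : Type u) [TopologicalSpace A] [DiscreteTopology A]
    (hA : #A = α) (hK : #K = κ) :
    α ^< κ ≤ @dens (∀ _ : K, A) (boxTopology κ fun _ => A) := by
  let := boxTopology κ fun _ : K => A
  have : Nonempty A := mk_ne_zero_iff.mp (hA ▸ (two_pos.trans_le hα).ne')
  refine le_dens_of_forall_dense fun D hD => powerlt_le.mpr fun ν hν => ?_
  obtain ⟨S, hS⟩ := le_mk_iff_exists_set.mp (hν.le.trans_eq hK.symm)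
  calc α ^ ν = #(S → A) := by rw [← hA, ← hS, power_def]
    _ ≤ #D := mk_pi_le_of_dense_boxTopology hD (hS ▸ hν)

theorem stmt7 (α κ : Cardinal.{u}) (hα : 2 ≤ α) (hκ : ℵ₀ ≤ κ)
    (A K : Type u) [TopologicalSpace A] [DiscreteTopology A]
    (hA : #A = α) (hK : #K = κ) :
    α ^< κ ≤ @dens (∀ _ : K, A) (boxTopology κ fun _ => A) :=
  stmt7_general α κ hα A K hA hK
end

section
/- Let α, β, κ be cardinals with ω ≤ κ ≤ β ≤ 2^α. Then d(((D(α))^β)_κ) = α^{<κ}. -/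
open Cardinal TopologicalSpace Set

universe u

/-!
A dense set `D` of the `κ`-box product must realise every assignment on each set `T` of
`λ < κ` coordinates, so restriction to `T` maps `D` onto `A ^ T` and `α ^ λ ≤ |D|`.

Conversely, `β ≤ 2 ^ α` lets the coordinates be coded as distinct maps `e t : A → Bool`. For
`|T| = λ < κ`, choose for each pair of points of `T` a test point of `A` where their codes differ;
on these `λ²` test points every `t ∈ T` has its own pattern. A point of the product agreeing with
a given one on `T` is then determined by the test points, the patterns of the points of `T` and
the values assigned to them: `λ²` elements of `A` and `λ⁴` bits. Collecting all such codes for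
all `λ < κ` gives a dense set of size `κ · α ^< κ = α ^< κ`.
-/

open Function

namespace BoxTopology

section Basis

variable (κ : Cardinal.{u}) {ι : Type u} (X : ι → Type u) [∀ i, TopologicalSpace (X i)]

def smallBoxes : Set (Set (∀ i, X i)) :=
  {S | ∃ U : ∀ i, Set (X i), (∀ i, IsOpen (U i)) ∧ #{i | U i ≠ Set.univ} < κ ∧ S = pi Set.univ U}

def IsInterpolating (D : Set (∀ i, X i)) : Prop :=
  ∀ T : Set ι, #T < κ → ∀ q : ∀ i, X i, ∃ d ∈ D, ∀ i ∈ T, d i = q i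

variable {κ X}

theorem isTopologicalBasis_smallBoxes (hκ : ℵ₀ ≤ κ) :
    @IsTopologicalBasis _ (boxTopology κ X) (smallBoxes κ X) := by
  refine @IsTopologicalBasis.mk _ (boxTopology κ X) _ ?_ ?_ (by rfl)
  · rintro _ ⟨U, hUo, hU, rfl⟩ _ ⟨V, hVo, hV, rfl⟩ x hx
    refine ⟨_, ⟨fun i => U i ∩ V i, fun i => (hUo i).inter (hVo i), ?_, rfl⟩,
      by rwa [pi_inter_distrib], by rw [pi_inter_distrib]⟩
    have hsub : {i | U i ∩ V i ≠ Set.univ} ⊆ {i | U i ≠ Set.univ} ∪ {i | V i ≠ Set.univ} := by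
      intro i hi
      by_contra h
      simp_all
    calc #{i | U i ∩ V i ≠ Set.univ} ≤ #({i | U i ≠ Set.univ} ∪ {i | V i ≠ Set.univ} : Set ι) :=
          mk_le_mk_of_subset hsub
      _ ≤ #{i | U i ≠ Set.univ} + #{i | V i ≠ Set.univ} := mk_union_le _ _
      _ < κ := add_lt_of_lt hκ hU hV
  · refine sUnion_eq_univ_iff.2 fun x =>
      ⟨Set.univ, ⟨fun _ => Set.univ, fun _ => isOpen_univ, ?_, by simp⟩, trivial⟩
    simpa using aleph0_pos.trans_le hκ

theorem dense_boxTopology_iff [∀ i, DiscreteTopology (X i)] (hκ : ℵ₀ ≤ κ)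
    {D : Set (∀ i, X i)} : @Dense _ (boxTopology κ X) D ↔ IsInterpolating κ X D := by
  classical
  rw [@IsTopologicalBasis.dense_iff _ (boxTopology κ X) _ (isTopologicalBasis_smallBoxes hκ)]
  constructor
  · intro h T hT q
    let U i : Set (X i) := if i ∈ T then {q i} else Set.univ
    have hUT : {i | U i ≠ Set.univ} ⊆ T := fun i hi => by_contra fun h => hi (if_neg h)
    obtain ⟨d, hdU, hdD⟩ := h (pi Set.univ U)
      ⟨U, fun i => isOpen_discrete _, (mk_le_mk_of_subset hUT).trans_lt hT, rfl⟩
      ⟨q, fun i _ => by by_cases hi : i ∈ T <;> simp [U, hi]⟩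
    exact ⟨d, hdD, fun i hi => by simpa [U, hi] using hdU i trivial⟩
  · rintro h _ ⟨U, -, hU, rfl⟩ ⟨x, hx⟩
    obtain ⟨d, hdD, hd⟩ := h _ hU x
    refine ⟨d, fun i _ => ?_, hdD⟩
    by_cases hi : U i = Set.univ
    · simp [hi]
    · exact hd i hi ▸ hx i trivial

end Basis

theorem dens_le_mk {X : Type u} [TopologicalSpace X] {D : Set X} (hD : Dense D) : dens X ≤ #D :=
  csInf_le' ⟨D, hD, rfl⟩

theorem exists_dense_mk_eq_dens (X : Type u) [TopologicalSpace X] :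
    ∃ D : Set X, Dense D ∧ #D = dens X :=
  csInf_mem (s := {c | ∃ D : Set X, Dense D ∧ #D = c}) ⟨_, Set.univ, dense_univ, rfl⟩

section LowerBound

variable {A B : Type u} [Nonempty A]

theorem power_mk_le_mk_of_forall_exists_eqOn {D : Set (B → A)} {T : Set B}
    (hD : ∀ q : B → A, ∃ d ∈ D, EqOn d q T) : #A ^ #T ≤ #D := by
  rw [power_def]
  refine mk_le_of_surjective (f := fun (d : D) (t : T) => (d : B → A) t) fun q => ?_
  obtain ⟨d, hdD, hd⟩ := hD (extend Subtype.val q fun _ => Classical.arbitrary A)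
  exact ⟨⟨d, hdD⟩, funext fun t => (hd t.2).trans (Subtype.val_injective.extend_apply _ _ t)⟩

theorem powerlt_le_mk_of_isInterpolating {κ : Cardinal.{u}} (hκB : κ ≤ #B) {D : Set (B → A)}
    (hD : IsInterpolating κ (fun _ => A) D) : #A ^< κ ≤ #D :=
  powerlt_le.2 fun μ hμ => by
    obtain ⟨T, rfl⟩ := le_mk_iff_exists_set.1 (hμ.le.trans hκB)
    exact power_mk_le_mk_of_forall_exists_eqOn (hD T hμ)

end LowerBound


section UpperBound

variable {A B P : Type u}

abbrev Code (P A : Type u) : Type u := (P → A) × (P → P → Bool) × (P → A)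

/-- A code `(s, k, g)` reads `t` through its pattern `i ↦ e t (s i)` on the test points `s`: the
pattern `k p` is sent to `g p`, unlisted patterns to `a₀`. -/
noncomputable def decode (e : B → A → Bool) (a₀ : A) (c : Code P A) (t : B) : A :=
  extend c.2.1 c.2.2 (fun _ => a₀) fun i => e t (c.1 i)

theorem exists_decode_eqOn {e : B → A → Bool} (he : Injective e) (a₀ : A) {T : Set B}
    {π : P → T × T} (hπ : Surjective π) (q : B → A) :
    ∃ c : Code P A, EqOn (decode e a₀ c) q T := by
  have hsep (x y : B) : ∃ a, x ≠ y → e x a ≠ e y a := by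
    by_cases h : x = y
    · exact ⟨a₀, absurd h⟩
    · exact (Function.ne_iff.1 (he.ne h)).imp fun _ ha _ => ha
  choose sep hsep using hsep
  let s p := sep (π p).1 (π p).2
  let k p i := e (π p).1 (s i)
  refine ⟨(s, k, fun p => q (π p).1), fun t ht => ?_⟩
  -- the test point indexed by `(x, t)` tells `x` from `t`
  have hk : ∀ p, k p = (fun i => e t (s i)) → ((π p).1 : B) = t := by
    intro p hp
    by_contra hne
    obtain ⟨i, hi⟩ := hπ ((π p).1, ⟨t, ht⟩)
    exact hsep _ _ hne (by simpa [k, s, hi] using congrFun hp i)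
  obtain ⟨p, hp⟩ := hπ (⟨t, ht⟩, ⟨t, ht⟩)
  have hex : ∃ p, k p = fun i => e t (s i) := ⟨p, by simp [k, hp]⟩
  classical
  rw [decode, extend_def, dif_pos hex]
  exact congrArg q (hk _ hex.choose_spec)

theorem mk_code_le {κ : Cardinal.{u}} (hκ : ℵ₀ ≤ κ) (hA : 2 ≤ #A) (hP : #P < κ) :
    #(Code P A) ≤ #A ^< κ := by
  have hPP : #P * #P < κ := mul_lt_of_lt hκ hP hP
  calc #(Code P A) = #A ^ #P * (2 ^ (#P * #P) * #A ^ #P) := by simp [power_mul]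
    _ ≤ #A ^ #P * (#A ^ (#P * #P) * #A ^ #P) := by
        gcongr
        exact power_le_power_right hA
    _ = #A ^ (#P + (#P * #P + #P)) := by rw [power_add, power_add]
    _ ≤ #A ^< κ := le_powerlt _ (add_lt_of_lt hκ hP (add_lt_of_lt hκ hPP hP))

theorem exists_mk_Iio_eq {κ μ : Cardinal.{u}} (h : μ < κ) :
    ∃ j : κ.ord.ToType, #(Iio j) = μ := by
  let j : κ.ord.ToType := Ordinal.ToType.mk ⟨μ.ord, mem_Iio.2 (ord_lt_ord.2 h)⟩
  have := Ordinal.card_typein (α := κ.ord.ToType) (r := (· < ·)) j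
  rw [← Ordinal.ToType.mk_symm_apply_coe, RelIso.symm_apply_apply, card_ord] at this
  exact ⟨j, this.symm⟩

theorem le_powerlt_self {a : Cardinal.{u}} (c : Cardinal.{u}) (ha : 1 < a) : c ≤ a ^< c := by
  by_contra! h
  exact (cantor' _ ha).not_ge (le_powerlt a h)

theorem exists_isInterpolating {κ : Cardinal.{u}} (hκ : ℵ₀ ≤ κ) (hA : 2 ≤ #A)
    (hB : #B ≤ 2 ^ #A) :
    ∃ D : Set (B → A), #D ≤ #A ^< κ ∧ IsInterpolating κ (fun _ => A) D := by
  obtain ⟨e⟩ : Nonempty (B ↪ (A → Bool)) := (le_def _ _).1 (hB.trans_eq (by simp))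
  obtain ⟨a₀⟩ : Nonempty A := mk_ne_zero_iff.1 (zero_lt_two.trans_le hA).ne'
  let D (j : κ.ord.ToType) := range (decode e a₀ : Code (Iio j) A → B → A)
  refine ⟨⋃ j : κ.ord.ToType, D j, ?_, fun T hT q => ?_⟩
  · have hκA : κ ≤ #A ^< κ := le_powerlt_self κ (Cardinal.one_lt_two.trans_le hA)
    have hD j : #(D j) ≤ #A ^< κ :=
      mk_range_le.trans (mk_code_le hκ hA (by simpa using mk_Iio_lt j))
    calc #(⋃ j, D j) ≤ #κ.ord.ToType * ⨆ j, #(D j) := mk_iUnion_le _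
      _ ≤ κ * #A ^< κ := by
        rw [mk_ord_toType]
        exact mul_le_mul_right (ciSup_le' hD) κ
      _ = #A ^< κ := mul_eq_right (hκ.trans hκA) hκA (aleph0_pos.trans_le hκ).ne'
  · obtain ⟨j, hj⟩ := exists_mk_Iio_eq (mul_lt_of_lt hκ hT hT)
    obtain ⟨π⟩ : Nonempty (Iio j ≃ T × T) := Cardinal.eq.1 (by rw [hj, mk_prod, lift_id])
    obtain ⟨c, hc⟩ := exists_decode_eqOn e.injective a₀ π.surjective q
    exact ⟨_, mem_iUnion.2 ⟨j, c, rfl⟩, hc⟩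

end UpperBound

end BoxTopology

open BoxTopology in
theorem stmt8 (α β κ : Cardinal.{u}) (hκ : ℵ₀ ≤ κ) (hκβ : κ ≤ β) (hβ : β ≤ 2 ^ α)
    (A B : Type u) [TopologicalSpace A] [DiscreteTopology A]
    (hA : #A = α) (hB : #B = β) :
    @dens (∀ _ : B, A) (boxTopology κ fun _ => A) = α ^< κ := by
  subst hA hB
  have hA2 : 2 ≤ #A := by
    by_contra! h
    have h2 : (2 : Cardinal) < ℵ₀ := natCast_lt_aleph0
    exact (power_lt_aleph0 h2 (h.trans h2)).not_ge (hκ.trans (hκβ.trans hβ))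
  have : Nonempty A := mk_ne_zero_iff.1 (zero_lt_two.trans_le hA2).ne'
  apply le_antisymm
  · obtain ⟨D, hDcard, hD⟩ := exists_isInterpolating hκ hA2 hβ
    exact (@dens_le_mk _ (boxTopology κ _) _ ((dense_boxTopology_iff hκ).2 hD)).trans hDcard
  · obtain ⟨D, hD, hDcard⟩ := @exists_dense_mk_eq_dens _ (boxTopology κ fun _ : B => A)
    exact hDcard ▸ powerlt_le_mk_of_isInterpolating hκβ ((dense_boxTopology_iff hκ).1 hD)
end
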